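/- Let ψ : ℝ² → ℝ be C³ with ψ(0,0) = 0, ∇ψ(0,0) = 0, and suppose the Hessian of ψ at 0 is diagonal with entries 2A₂₀ and 2A₀₂ where A₂₀ = 0, A₀₂ ≠ 0, and the third-order Taylor coefficient A₂₁ of ξ₁²ξ₂ is nonzero. Then in every neighborhood of (0,0) there exist points where the Hessian determinant ψ₁₁ψ₂₂ − ψ₁₂² is strictly positive and points where it is strictly negative. -/

import Mathlib

/-!
Along the `ξ₂`-axis the Hessian determinant `H(b) = ψ₁₁(0,b) ψ₂₂(0,b) - ψ₁₂(0,b)²` vanishes at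
`b = 0` (since `ψ₁₁(0,0) = ψ₁₂(0,0) = 0`) and has derivative `ψ₁₁₂(0,0) ψ₂₂(0,0) = 4 A₀₂ A₂₁ ≠ 0`
there. A function with nonzero derivative has no local extremum, so `H` takes both signs
arbitrarily close to `0`.
-/

open Filter Topology Function

section PartialDerivatives

variable {𝕜 : Type*} [NontriviallyNormedField 𝕜] {E : Type*} [NormedAddCommGroup E]
  [NormedSpace 𝕜 E] {ψ : 𝕜 → 𝕜 → E}

theorem deriv_fst_eq_fderiv_uncurry {a b : 𝕜} (h : DifferentiableAt 𝕜 (uncurry ψ) (a, b)) :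
    deriv (fun s => ψ s b) a = fderiv 𝕜 (uncurry ψ) (a, b) (1, 0) :=
  (h.hasFDerivAt.comp_hasDerivAt (f := fun s => (s, b)) a
    ((hasDerivAt_id a).prodMk (hasDerivAt_const a b))).deriv

theorem deriv_snd_eq_fderiv_uncurry {a b : 𝕜} (h : DifferentiableAt 𝕜 (uncurry ψ) (a, b)) :
    deriv (fun s => ψ a s) b = fderiv 𝕜 (uncurry ψ) (a, b) (0, 1) :=
  (h.hasFDerivAt.comp_hasDerivAt (f := fun s => (a, s)) b
    ((hasDerivAt_const b a).prodMk (hasDerivAt_id b))).deriv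

theorem ContDiff.uncurry_deriv_fst {n : WithTop ℕ∞} (h : ContDiff 𝕜 (n + 1) (uncurry ψ)) :
    ContDiff 𝕜 n (uncurry fun a b => deriv (fun s => ψ s b) a) := by
  have hdiff : Differentiable 𝕜 (uncurry ψ) := h.differentiable (by simp)
  have heq : (uncurry fun a b => deriv (fun s => ψ s b) a) =
      fun p => fderiv 𝕜 (uncurry ψ) p (1, 0) :=
    funext fun p => deriv_fst_eq_fderiv_uncurry (hdiff p)
  rw [heq]
  exact (h.fderiv_right le_rfl).clm_apply contDiff_const

theorem ContDiff.uncurry_deriv_snd {n : WithTop ℕ∞} (h : ContDiff 𝕜 (n + 1) (uncurry ψ)) :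
    ContDiff 𝕜 n (uncurry fun a b => deriv (fun s => ψ a s) b) := by
  have hdiff : Differentiable 𝕜 (uncurry ψ) := h.differentiable (by simp)
  have heq : (uncurry fun a b => deriv (fun s => ψ a s) b) =
      fun p => fderiv 𝕜 (uncurry ψ) p (0, 1) :=
    funext fun p => deriv_snd_eq_fderiv_uncurry (hdiff p)
  rw [heq]
  exact (h.fderiv_right le_rfl).clm_apply contDiff_const

theorem Differentiable.uncurry_apply (h : Differentiable 𝕜 (uncurry ψ)) (a : 𝕜) :
    Differentiable 𝕜 (ψ a) :=
  h.comp ((differentiable_const a).prodMk differentiable_id)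

end PartialDerivatives

theorem exists_lt_and_gt_of_hasDerivAt_ne_zero {f : ℝ → ℝ} {f' x : ℝ} (hf : HasDerivAt f f' x)
    (hf' : f' ≠ 0) {s : Set ℝ} (hs : s ∈ 𝓝 x) :
    (∃ y ∈ s, f x < f y) ∧ (∃ y ∈ s, f y < f x) := by
  have hnotMax : ¬IsLocalMax f x := fun hmax => hf' (hmax.hasDerivAt_eq_zero hf)
  have hnotMin : ¬IsLocalMin f x := fun hmin => hf' (hmin.hasDerivAt_eq_zero hf)
  simp only [IsLocalMax, IsLocalMin, IsMaxFilter, IsMinFilter, not_eventually, not_le]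
    at hnotMax hnotMin
  exact ⟨(hnotMax.and_eventually hs).exists.imp fun y hy => ⟨hy.2, hy.1⟩,
    (hnotMin.and_eventually hs).exists.imp fun y hy => ⟨hy.2, hy.1⟩⟩

theorem stmt3_general (ψ : ℝ → ℝ → ℝ) (A₂₀ A₀₂ A₂₁ : ℝ)
    (hC3 : ContDiff ℝ 3 (fun p : ℝ × ℝ => ψ p.1 p.2))
    (h11 : deriv (fun t => deriv (fun s => ψ s 0) t) 0 = 2 * A₂₀)
    (h22 : deriv (fun t => deriv (fun s => ψ 0 s) t) 0 = 2 * A₀₂)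
    (h12 : deriv (fun t => deriv (fun s => ψ t s) 0) 0 = 0)
    (hA20 : A₂₀ = 0) (hA02 : A₀₂ ≠ 0)
    (h112 : deriv (fun v => deriv (fun u => deriv (fun s => ψ s v) u) 0) 0 = 2 * A₂₁)
    (hA21 : A₂₁ ≠ 0) :
    ∀ ε > (0 : ℝ),
      (∃ a b : ℝ, a ^ 2 + b ^ 2 < ε ^ 2 ∧
        0 < deriv (fun t => deriv (fun s => ψ s b) t) a *
              deriv (fun t => deriv (fun s => ψ a s) t) b -
              (deriv (fun t => deriv (fun s => ψ t s) b) a) ^ 2) ∧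
      (∃ a b : ℝ, a ^ 2 + b ^ 2 < ε ^ 2 ∧
        deriv (fun t => deriv (fun s => ψ s b) t) a *
            deriv (fun t => deriv (fun s => ψ a s) t) b -
            (deriv (fun t => deriv (fun s => ψ t s) b) a) ^ 2 < 0) := by
  intro ε hε
  have hψ : ContDiff ℝ (1 + 1 + 1) (uncurry ψ) := hC3
  have hψ₁ := hψ.uncurry_deriv_fst
  have hψ₂ := hψ.uncurry_deriv_snd
  have hψ₁₁ := (hψ₁.uncurry_deriv_fst.differentiable one_ne_zero).uncurry_apply 0
  have hψ₂₂ := (hψ₂.uncurry_deriv_snd.differentiable one_ne_zero).uncurry_apply 0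
  have hψ₁₂ := (hψ₂.uncurry_deriv_fst.differentiable one_ne_zero).uncurry_apply 0
  set H : ℝ → ℝ := fun b => deriv (fun t => deriv (fun s => ψ s b) t) 0 *
    deriv (fun t => deriv (fun s => ψ 0 s) t) b - (deriv (fun t => deriv (fun s => ψ t s) b) 0) ^ 2
  have hH0 : H 0 = 0 := by simp only [H, h11, h12, hA20]; ring
  have hψ₁₁₂ : HasDerivAt (fun b => deriv (fun t => deriv (fun s => ψ s b) t) 0) (2 * A₂₁) 0 :=
    h112 ▸ (hψ₁₁ 0).hasDerivAt
  have hH : HasDerivAt H (4 * A₀₂ * A₂₁) 0 := by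
    refine (hψ₁₁₂.mul (hψ₂₂ 0).hasDerivAt).sub ((hψ₁₂ 0).hasDerivAt.pow 2) |>.congr_deriv ?_
    simp only [h11, h22, h12, hA20]
    ring
  obtain ⟨⟨bpos, hbpos, hpos⟩, ⟨bneg, hbneg, hneg⟩⟩ := exists_lt_and_gt_of_hasDerivAt_ne_zero hH
    (by positivity) (Metric.ball_mem_nhds 0 hε)
  have hsq : ∀ b ∈ Metric.ball (0 : ℝ) ε, (0 : ℝ) ^ 2 + b ^ 2 < ε ^ 2 := fun b hb => by
    rw [mem_ball_zero_iff, Real.norm_eq_abs] at hb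
    nlinarith [abs_nonneg b, sq_abs b]
  rw [hH0] at hpos hneg
  exact ⟨⟨0, bpos, hsq bpos hbpos, hpos⟩, ⟨0, bneg, hsq bneg hbneg, hneg⟩⟩

/-- If `ψ` is `C³` with `ψ(0,0) = 0`, `∇ψ(0,0) = 0`, Hessian at the origin diagonal with
entries `2A₂₀ = 0` and `2A₀₂ ≠ 0`, and the third-order Taylor coefficient `A₂₁` of
`ξ₁²ξ₂` (i.e. `ψ₁₁₂(0,0) = 2A₂₁`) is nonzero, then every neighborhood of the origin
contains points where the Hessian determinant `ψ₁₁ψ₂₂ − ψ₁₂²` is strictly positive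
and points where it is strictly negative. -/
theorem stmt3 (ψ : ℝ → ℝ → ℝ) (A₂₀ A₀₂ A₂₁ : ℝ)
    (hC3 : ContDiff ℝ 3 (fun p : ℝ × ℝ => ψ p.1 p.2))
    (h0 : ψ 0 0 = 0)
    (h1 : deriv (fun t => ψ t 0) 0 = 0)
    (h2 : deriv (fun t => ψ 0 t) 0 = 0)
    (h11 : deriv (fun t => deriv (fun s => ψ s 0) t) 0 = 2 * A₂₀)
    (h22 : deriv (fun t => deriv (fun s => ψ 0 s) t) 0 = 2 * A₀₂)
    (h12 : deriv (fun t => deriv (fun s => ψ t s) 0) 0 = 0)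
    (h21 : deriv (fun t => deriv (fun s => ψ s t) 0) 0 = 0)
    (hA20 : A₂₀ = 0) (hA02 : A₀₂ ≠ 0)
    (h112 : deriv (fun v => deriv (fun u => deriv (fun s => ψ s v) u) 0) 0 = 2 * A₂₁)
    (hA21 : A₂₁ ≠ 0) :
    ∀ ε > (0 : ℝ),
      (∃ a b : ℝ, a ^ 2 + b ^ 2 < ε ^ 2 ∧
        0 < deriv (fun t => deriv (fun s => ψ s b) t) a *
              deriv (fun t => deriv (fun s => ψ a s) t) b -
              (deriv (fun t => deriv (fun s => ψ t s) b) a) ^ 2) ∧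
      (∃ a b : ℝ, a ^ 2 + b ^ 2 < ε ^ 2 ∧
        deriv (fun t => deriv (fun s => ψ s b) t) a *
            deriv (fun t => deriv (fun s => ψ a s) t) b -
            (deriv (fun t => deriv (fun s => ψ t s) b) a) ^ 2 < 0) :=
  stmt3_general ψ A₂₀ A₀₂ A₂₁ hC3 h11 h22 h12 hA20 hA02 h112 hA21
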